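/- Let g be a non-constant polynomial over ℂ (viewed as a function ℂ → ℂ), and let f: ℂ → ℂ be an arbitrary function such that the composite f ∘ g is a polynomial function. Then f is a polynomial function; that is, there exists a polynomial p ∈ ℂ[X] with f(z) = p(z) for all z ∈ ℂ. -/

import Mathlib

open Polynomial

namespace Stmt4Aux

noncomputable section

/-- `g(Y) - g(X)` viewed as a polynomial in `Y` over `ℂ[X]`. -/
def HH (g : ℂ[X]) : Polynomial (Polynomial ℂ) :=
  g.map (C : ℂ →+* ℂ[X]) - Polynomial.C g

/-- `q(Y) - q(X)` viewed as a polynomial in `Y` over `ℂ[X]`. -/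
def QQ (q : ℂ[X]) : Polynomial (Polynomial ℂ) :=
  q.map (C : ℂ →+* ℂ[X]) - Polynomial.C q

lemma map_HH (g : ℂ[X]) (x : ℂ) :
    (HH g).map (evalRingHom x) = g - C (g.eval x) := by
  have hcomp : (evalRingHom x).comp (C : ℂ →+* ℂ[X]) = RingHom.id ℂ := by
    ext c; simp
  unfold HH
  rw [Polynomial.map_sub, map_map, hcomp, map_id, map_C]
  rfl

lemma map_QQ (q : ℂ[X]) (x : ℂ) :
    (QQ q).map (evalRingHom x) = q - C (q.eval x) := map_HH q x

lemma HH_monic {g : ℂ[X]} (hm : g.Monic) (hdeg : 0 < g.natDegree) : (HH g).Monic := by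
  have h1 : (g.map (C : ℂ →+* ℂ[X])).Monic := hm.map _
  have h2 : (g.map (C : ℂ →+* ℂ[X])).degree = g.degree :=
    degree_map_eq_of_injective C_injective g
  have h3 : (Polynomial.C g).degree < (g.map (C : ℂ →+* ℂ[X])).degree := by
    refine lt_of_le_of_lt degree_C_le ?_
    rw [h2]
    exact natDegree_pos_iff_degree_pos.mp hdeg
  have : (HH g) = g.map (C : ℂ →+* ℂ[X]) + (-(Polynomial.C g)) := by
    unfold HH; ring
  rw [this]
  exact h1.add_of_left (by simpa using h3)

lemma sub_C_ne_zero {g : ℂ[X]} (hdeg : 0 < g.natDegree) (c : ℂ) : g - C c ≠ 0 := by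
  intro h
  have := natDegree_sub_C (p := g) (a := c)
  rw [h] at this
  simp at this
  omega

/-- For generic `x` (no critical point in the fibre of `g x`),
`g - g(x)` divides `q - q(x)`. -/
lemma good_dvd {g : ℂ[X]} (q : ℂ[X])
    (hq : ∀ z₁ z₂ : ℂ, g.eval z₁ = g.eval z₂ → q.eval z₁ = q.eval z₂)
    (hdeg : 0 < g.natDegree) (x : ℂ)
    (hx : ∀ z : ℂ, g.derivative.eval z = 0 → g.eval x ≠ g.eval z) :
    (g - C (g.eval x)) ∣ (q - C (q.eval x)) := by
  classical
  by_cases hQ0 : q - C (q.eval x) = 0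
  · simp [hQ0]
  set r : ℂ[X] := g - C (g.eval x) with hr
  have hr0 : r ≠ 0 := sub_C_ne_zero hdeg _
  have hroot_eq : ∀ z ∈ r.roots, g.eval z = g.eval x := by
    intro z hz
    have hz0 : r.eval z = 0 := (mem_roots hr0).mp hz
    simp only [hr, eval_sub, eval_C, sub_eq_zero] at hz0
    exact hz0
  have hnodup : r.roots.Nodup := by
    rw [Multiset.nodup_iff_count_le_one]
    intro z
    by_contra h
    push_neg at h
    have h2 : 2 ≤ rootMultiplicity z r := by
      have := count_roots (a := z) r
      omega
    have hdvd : (X - C z) ^ 2 ∣ r := dvd_trans (pow_dvd_pow _ h2) (pow_rootMultiplicity_dvd r z)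
    obtain ⟨s, hs⟩ := hdvd
    have hz_root : g.derivative.eval z = 0 := by
      have hdr : derivative r = derivative g := by simp [hr]
      have h0 : (derivative r).eval z = 0 := by
        rw [hs, derivative_mul, derivative_pow]
        simp
      rwa [hdr] at h0
    have hz_mem : z ∈ r.roots := by
      rw [mem_roots hr0]
      rw [IsRoot, hs]; simp
    exact hx z hz_root (hroot_eq z hz_mem).symm
  -- key: r = product of distinct linear factors, each dividing q - C (q x)
  have hle : r.roots ≤ (q - C (q.eval x)).roots := by
    rw [Multiset.le_iff_count]
    intro a
    by_cases ha : a ∈ r.roots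
    · have h1 : r.roots.count a ≤ 1 := (Multiset.nodup_iff_count_le_one.mp hnodup) a
      have hga : g.eval a = g.eval x := hroot_eq a ha
      have hqa : (q - C (q.eval x)).eval a = 0 := by
        simp [hq a x hga]
      have hmem : a ∈ (q - C (q.eval x)).roots := by
        rw [mem_roots hQ0]; exact hqa
      have h2 : 1 ≤ (q - C (q.eval x)).roots.count a := Multiset.one_le_count_iff_mem.mpr hmem
      omega
    · rw [Multiset.count_eq_zero_of_notMem ha]
      omega
  have hprod : (r.roots.map fun a => X - C a).prod ∣ (q - C (q.eval x)) := by
    refine dvd_trans ?_ (prod_multiset_X_sub_C_dvd (q - C (q.eval x)))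
    exact Multiset.prod_dvd_prod_of_le (Multiset.map_le_map hle)
  have hsplit : r = C r.leadingCoeff * (r.roots.map fun a => X - C a).prod :=
    (IsAlgClosed.splits r).eq_prod_roots
  have hu : IsUnit (C r.leadingCoeff) :=
    isUnit_C.mpr (isUnit_iff_ne_zero.mpr (leadingCoeff_ne_zero.mpr hr0))
  rw [hsplit]
  exact (hu.mul_left_dvd).mpr hprod


lemma sub_C_monic {g : ℂ[X]} (hm : g.Monic) (hdeg : 0 < g.natDegree) (c : ℂ) :
    (g - C c).Monic := by
  have h : g - C c = g + (-(C c)) := by ring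
  rw [h]
  refine hm.add_of_left ?_
  rw [degree_neg]
  exact lt_of_le_of_lt degree_C_le (natDegree_pos_iff_degree_pos.mp hdeg)

lemma exists_factor {g : ℂ[X]} (hm : g.Monic) (hdeg : 0 < g.natDegree) (q : ℂ[X])
    (hq : ∀ z₁ z₂ : ℂ, g.eval z₁ = g.eval z₂ → q.eval z₁ = q.eval z₂) :
    ∃ A : Polynomial (Polynomial ℂ), QQ q = HH g * A := by
  classical
  have hHm : (HH g).Monic := HH_monic hm hdeg
  set R := QQ q %ₘ HH g with hR
  have hg' : g.derivative ≠ 0 := by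
    intro h
    have := natDegree_eq_zero_of_derivative_eq_zero h
    omega
  set Bad : Set ℂ := {x | ∃ z : ℂ, g.derivative.eval z = 0 ∧ g.eval x = g.eval z} with hBad
  have hBadFin : Bad.Finite := by
    have hsub : Bad ⊆ ⋃ z ∈ g.derivative.roots.toFinset,
        {x : ℂ | (g - C (g.eval z)).IsRoot x} := by
      intro x hx
      obtain ⟨z, hz1, hz2⟩ := hx
      refine Set.mem_iUnion₂.mpr ⟨z, ?_, ?_⟩
      · rw [Multiset.mem_toFinset, mem_roots hg']
        exact hz1
      · simp [IsRoot, hz2]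
    refine Set.Finite.subset ?_ hsub
    refine Set.Finite.biUnion (Finset.finite_toSet _) ?_
    intro z _
    exact finite_setOf_isRoot (sub_C_ne_zero hdeg _)
  have hGoodInf : (Badᶜ : Set ℂ).Infinite := hBadFin.infinite_compl
  have hRzero : R = 0 := by
    apply Polynomial.ext
    intro k
    rw [coeff_zero]
    apply Polynomial.eq_zero_of_infinite_isRoot
    apply hGoodInf.mono
    intro x hx
    simp only [Set.mem_compl_iff, hBad, Set.mem_setOf_eq, not_exists, not_and] at hx
    have hdvd : (g - C (g.eval x)) ∣ (q - C (q.eval x)) :=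
      good_dvd q hq hdeg x (fun z h1 => hx z h1)
    have h1 : R.map (evalRingHom x) = 0 := by
      rw [hR, map_modByMonic _ hHm, map_HH, map_QQ]
      exact (modByMonic_eq_zero_iff_dvd (sub_C_monic hm hdeg _)).mpr hdvd
    have h2 := congrArg (fun P => Polynomial.coeff P k) h1
    simpa [coeff_map, IsRoot] using h2
  refine ⟨QQ q /ₘ HH g, ?_⟩
  have h := modByMonic_add_div (QQ q) (HH g)
  conv_lhs => rw [← h]
  rw [← hR, hRzero, zero_add]

lemma rep {g : ℂ[X]} (hm : g.Monic) (hdeg : 0 < g.natDegree) :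
    ∀ n : ℕ, ∀ q : ℂ[X], q.natDegree ≤ n →
      (∀ z₁ z₂ : ℂ, g.eval z₁ = g.eval z₂ → q.eval z₁ = q.eval z₂) →
      ∃ p : ℂ[X], ∀ z : ℂ, q.eval z = p.eval (g.eval z) := by
  intro n
  induction n with
  | zero =>
    intro q hdq _
    refine ⟨C (q.coeff 0), fun z => ?_⟩
    conv_lhs => rw [eq_C_of_natDegree_eq_zero (Nat.le_zero.mp hdq)]
    simp
  | succ n ih =>
    intro q hdq hq
    obtain ⟨A, hA⟩ := exists_factor hm hdeg q hq
    set b : ℂ[X] := A.eval 0 with hb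
    have hApt : ∀ x : ℂ, ((A.map (evalRingHom x)).eval 0 : ℂ) = b.eval x := by
      intro x
      rw [eval_map]
      have h0 : (0 : ℂ) = (evalRingHom x) 0 := by simp
      rw [h0, eval₂_at_apply]
      simp [hb]
    have hpt : ∀ x : ℂ, q.eval x = q.eval 0 + (g.eval x - g.eval 0) * b.eval x := by
      intro x
      have h1 := congrArg (fun P => ((P.map (evalRingHom x)).eval (0 : ℂ))) hA
      simp only [Polynomial.map_mul, eval_mul, map_QQ, map_HH, eval_sub, eval_C] at h1
      rw [hApt x] at h1
      linear_combination -h1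
    have hbfib : ∀ z₁ z₂ : ℂ, g.eval z₁ = g.eval z₂ → b.eval z₁ = b.eval z₂ := by
      intro z₁ z₂ h
      have hQ12 : (QQ q).map (evalRingHom z₁) = (QQ q).map (evalRingHom z₂) := by
        rw [map_QQ, map_QQ, hq z₁ z₂ h]
      have hH12 : (HH g).map (evalRingHom z₁) = (HH g).map (evalRingHom z₂) := by
        rw [map_HH, map_HH, h]
      have hH0 : (HH g).map (evalRingHom z₁) ≠ 0 := by
        rw [map_HH]; exact sub_C_ne_zero hdeg _
      have hcancel : A.map (evalRingHom z₁) = A.map (evalRingHom z₂) := by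
        apply mul_left_cancel₀ hH0
        have e1 := congrArg (Polynomial.map (evalRingHom z₁)) hA
        have e2 := congrArg (Polynomial.map (evalRingHom z₂)) hA
        rw [Polynomial.map_mul] at e1 e2
        rw [← e1, hQ12, e2, hH12]
      rw [← hApt z₁, ← hApt z₂, hcancel]
    by_cases hb0 : b = 0
    · refine ⟨C (q.eval 0), fun z => ?_⟩
      simp [hpt z, hb0]
    · have hid : q - C (q.eval 0) = (g - C (g.eval 0)) * b := by
        apply Polynomial.funext
        intro x
        simp only [eval_sub, eval_C, eval_mul]
        rw [hpt x]; ring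
      have hdb : b.natDegree ≤ n := by
        have h2 : (q - C (q.eval 0)).natDegree = q.natDegree := natDegree_sub_C
        have h3 : ((g - C (g.eval 0)) * b).natDegree
            = (g - C (g.eval 0)).natDegree + b.natDegree :=
          natDegree_mul (sub_C_ne_zero hdeg _) hb0
        have h4 : (g - C (g.eval 0)).natDegree = g.natDegree := natDegree_sub_C
        rw [hid, h3, h4] at h2
        omega
      obtain ⟨p₁, hp₁⟩ := ih b hdb hbfib
      refine ⟨C (q.eval 0) + (X - C (g.eval 0)) * p₁, fun z => ?_⟩
      simp only [eval_add, eval_mul, eval_sub, eval_C, eval_X]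
      rw [hpt z, hp₁ z]

end

end Stmt4Aux

/-- If `g` is a non-constant polynomial over `ℂ` and `f : ℂ → ℂ` is an
arbitrary function such that `f ∘ g` is a polynomial function, then `f` is a polynomial
function. -/
theorem stmt_4 (g : Polynomial ℂ) (hg : 0 < g.natDegree) (f : ℂ → ℂ)
    (hfg : ∃ q : Polynomial ℂ, ∀ z : ℂ, f (g.eval z) = q.eval z) :
    ∃ p : Polynomial ℂ, ∀ z : ℂ, f z = p.eval z := by
  obtain ⟨q, hq⟩ := hfg
  have hg0 : g ≠ 0 := fun h => by simp [h] at hg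
  have hu : g.leadingCoeff ≠ 0 := Polynomial.leadingCoeff_ne_zero.mpr hg0
  set g₁ : Polynomial ℂ := g * Polynomial.C g.leadingCoeff⁻¹ with hg₁
  have hm : g₁.Monic := Polynomial.monic_mul_leadingCoeff_inv hg0
  have hdeg₁ : 0 < g₁.natDegree := by
    rw [hg₁, Polynomial.natDegree_mul_leadingCoeff_inv g hg0]
    exact hg
  have heval : ∀ z : ℂ, g₁.eval z = g.eval z * g.leadingCoeff⁻¹ := by
    intro z; simp [hg₁]
  have hfib : ∀ z₁ z₂ : ℂ, g₁.eval z₁ = g₁.eval z₂ → q.eval z₁ = q.eval z₂ := by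
    intro z₁ z₂ h
    rw [heval, heval] at h
    have hgz : g.eval z₁ = g.eval z₂ :=
      mul_right_cancel₀ (inv_ne_zero hu) h
    rw [← hq z₁, ← hq z₂, hgz]
  obtain ⟨p₁, hp₁⟩ := Stmt4Aux.rep hm hdeg₁ q.natDegree q le_rfl hfib
  refine ⟨p₁.comp (Polynomial.X * Polynomial.C g.leadingCoeff⁻¹), fun w => ?_⟩
  obtain ⟨z, hz⟩ := Complex.exists_root (f := g - Polynomial.C w) (by
    have h5 : (g - Polynomial.C w).natDegree = g.natDegree := Polynomial.natDegree_sub_C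
    refine Polynomial.natDegree_pos_iff_degree_pos.mp ?_
    omega)
  have hzw : g.eval z = w := by
    have h6 : (g - Polynomial.C w).eval z = 0 := hz
    simp only [Polynomial.eval_sub, Polynomial.eval_C, sub_eq_zero] at h6
    exact h6
  rw [← hzw, hq z, hp₁ z, Polynomial.eval_comp]
  rw [heval z, mul_comm]
  simp
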